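/- arXiv:2001.05903 — 2 statements merged into one kernel-verified Lean document; each statement's English description precedes it below -/
import Mathlib

section
/- Collapsing of exponents in the finite setting (Theorem 1.1(i)): For every 0 < p ≤ ∞ there exists a constant C = C(p) such that for every finite outer measure setting (X, μ, ω) and every nonnegative function f on X one has (1/C) ‖f‖_{L^p(X,ω)} ≤ ‖f‖_{L^p(ℓ^p)} ≤ C ‖f‖_{L^p(X,ω)}. The point is that C is independent of X, μ and ω. -/
open MeasureTheory Set
open scoped ENNReal

noncomputable section

/-- The outer `ℓ^r` size in the finite setting: for `r < ∞`,
`ℓ^r(f)(A) = (μ(A)⁻¹ Σ_{x∈A} ω(x) f(x)^r)^{1/r}`; for `r = ∞` the sup of `f` on `A`. -/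
def ellF {X : Type} (μ : Set X → ℝ≥0∞) (ω : X → ℝ≥0∞)
    (r : ℝ≥0∞) (f : X → ℝ≥0∞) (A : Set X) : ℝ≥0∞ :=
  if r = ∞ then ⨆ x ∈ A, f x
  else ((μ A)⁻¹ * ∑' x : A, ω x.1 * f x.1 ^ r.toReal) ^ r.toReal⁻¹

/-- The outer `L^∞(ℓ^r)` quasi-norm in the finite setting. -/
def supF {X : Type} (μ : Set X → ℝ≥0∞) (ω : X → ℝ≥0∞)
    (r : ℝ≥0∞) (f : X → ℝ≥0∞) : ℝ≥0∞ :=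
  ⨆ A : Set X, ellF μ ω r f A

/-- The super level measure `μ(ℓ^r(f) > λ)` in the finite setting. -/
def slF {X : Type} (μ : Set X → ℝ≥0∞) (ω : X → ℝ≥0∞)
    (r : ℝ≥0∞) (f : X → ℝ≥0∞) (lam : ℝ≥0∞) : ℝ≥0∞ :=
  ⨅ (A : Set X) (_ : supF μ ω r (Aᶜ.indicator f) ≤ lam), μ A

/-- The outer `L^p(ℓ^r)` quasi-norm in the finite setting. -/
def LpF {X : Type} (μ : Set X → ℝ≥0∞) (ω : X → ℝ≥0∞)
    (p r : ℝ≥0∞) (f : X → ℝ≥0∞) : ℝ≥0∞ :=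
  if p = ∞ then supF μ ω r f
  else (∫⁻ l in Ioi (0:ℝ),
      ENNReal.ofReal (p.toReal * l ^ (p.toReal - 1)) *
        slF μ ω r f (ENNReal.ofReal l)) ^ p.toReal⁻¹

/-- The weighted `L^p(X,ω)` norm on a finite set. -/
def wLpF {X : Type} (ω : X → ℝ≥0∞) (p : ℝ≥0∞) (f : X → ℝ≥0∞) : ℝ≥0∞ :=
  if p = ∞ then ⨆ x, f x
  else (∑' x, ω x * f x ^ p.toReal) ^ p.toReal⁻¹

/-! Write `ν(A) = ∑_{x ∈ A} ω x f(x)^p`. Since `ℓ^p(f 1_{Aᶜ})(B)^p = ν(B \ A) / μ(B)`, the super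
level measure at `λ` is the least `μ(A)` such that `ν ≤ λ^p μ` on all subsets of `Aᶜ`, and the
substitution `t = λ^p` turns `‖f‖_{L^p(ℓ^p)}^p` into `∫_0^∞ E(t) dt` for this antitone `E`, which
vanishes for large `t`. The integral is comparable to the dyadic sum `∑ₙ tₙ E(tₙ)`, `tₙ = a 2^{-n}`.
Optimal exceptional sets `Aₙ` at consecutive levels give `ν(Aₙ₊₁ \ Aₙ) ≤ tₙ μ(Aₙ₊₁)`, hence
`ν(X) ≤ 2 ∑ₙ tₙ E(tₙ)`. Conversely, a greedy chain `B₀ ⊆ B₁ ⊆ ⋯`, where `Bₙ₊₁` adds to `Bₙ` a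
maximal set `Gₙ` with `tₙ μ(Gₙ) ≤ ν(Gₙ)`, gives `tₙ E(tₙ) ≤ ∑_{j ≤ n} 2^{j-n} ν(Gⱼ)`, and summing,
`∑ₙ tₙ E(tₙ) ≤ 2 ν(X)`. Altogether `ν(X) ≤ 4 ∫ E` and `∫ E ≤ 2 ν(X)`, so `C = 4^{1/p}` works. -/

open Filter Topology

structure IsFiniteOuterMeasure {X : Type} (μ : Set X → ℝ≥0∞) : Prop where
  empty : μ ∅ = 0
  mono : Monotone μ
  union_le : ∀ A B, μ (A ∪ B) ≤ μ A + μ B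
  singleton_pos : ∀ x, 0 < μ {x}
  singleton_lt_top : ∀ x, μ {x} < ∞

namespace IsFiniteOuterMeasure

variable {X : Type} {μ : Set X → ℝ≥0∞}

lemma pos (hμ : IsFiniteOuterMeasure μ) {A : Set X} (hA : A.Nonempty) : 0 < μ A :=
  let ⟨x, hx⟩ := hA
  (hμ.singleton_pos x).trans_le (hμ.mono (singleton_subset_iff.2 hx))

lemma lt_top [Finite X] (hμ : IsFiniteOuterMeasure μ) (A : Set X) : μ A < ∞ := by
  induction A, A.toFinite using Set.Finite.induction_on with
  | empty => simp [hμ.empty]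
  | @insert x s _ _ ih =>
    rw [insert_eq]
    exact (hμ.union_le _ _).trans_lt (ENNReal.add_lt_top.2 ⟨hμ.singleton_lt_top x, ih⟩)

end IsFiniteOuterMeasure

section Mass

variable {X : Type} (w : X → ℝ≥0∞)

def mass (A : Set X) : ℝ≥0∞ := ∑' x : A, w x

lemma mass_empty : mass w ∅ = 0 := tsum_empty

lemma mass_mono : Monotone (mass w) := fun _ _ h => ENNReal.tsum_mono_subtype w h

lemma mass_union {A B : Set X} (h : Disjoint A B) : mass w (A ∪ B) = mass w A + mass w B :=
  ENNReal.summable.tsum_union_disjoint h ENNReal.summable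

lemma mass_inter_add_diff (A B : Set X) : mass w (A ∩ B) + mass w (A \ B) = mass w A := by
  rw [← mass_union w (disjoint_sdiff_inter.symm), inter_union_sdiff]

lemma mass_eq_sum_range_diff {B : ℕ → Set X} (hB0 : B 0 = ∅) (hB : ∀ n, B n ⊆ B (n + 1))
    (n : ℕ) : mass w (B n) = ∑ j ∈ Finset.range n, mass w (B (j + 1) \ B j) := by
  induction n with
  | zero => simp [hB0, mass_empty]
  | succ n ih =>
    rw [Finset.sum_range_succ, ← ih, ← mass_union w disjoint_sdiff_right, union_sdiff_cancel (hB n)]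

end Mass

lemma le_sum_range_diff {X : Type} {μ : Set X → ℝ≥0∞} (hμ0 : μ ∅ = 0)
    (hμ : ∀ A B, μ (A ∪ B) ≤ μ A + μ B) {B : ℕ → Set X} (hB0 : B 0 = ∅)
    (hB : ∀ n, B n ⊆ B (n + 1)) (n : ℕ) :
    μ (B n) ≤ ∑ j ∈ Finset.range n, μ (B (j + 1) \ B j) := by
  induction n with
  | zero => simp [hB0, hμ0]
  | succ n ih =>
    rw [Finset.sum_range_succ]
    calc μ (B (n + 1)) = μ (B n ∪ (B (n + 1) \ B n)) := by rw [union_sdiff_cancel (hB n)]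
      _ ≤ _ := (hμ _ _).trans (add_le_add_left ih _)

/-- With `ν = mass (ω * f ^ p)` and `c = λ ^ p` this is the super level measure `μ(ℓ^p(f) > λ)`,
see `IsFiniteOuterMeasure.slF_eq_superLevel`. -/
def superLevel {X : Type} (μ ν : Set X → ℝ≥0∞) (c : ℝ≥0∞) : ℝ≥0∞ :=
  ⨅ (A : Set X) (_ : ∀ C ⊆ Aᶜ, ν C ≤ c * μ C), μ A

section SuperLevel

variable {X : Type} {μ ν : Set X → ℝ≥0∞}

lemma superLevel_antitone : Antitone (superLevel μ ν) := fun _ _ hc =>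
  le_iInf₂ fun A hA => iInf₂_le A fun C hC => (hA C hC).trans (by gcongr)

lemma superLevel_eq_zero (hμ0 : μ ∅ = 0) {c : ℝ≥0∞} (h : ∀ C, ν C ≤ c * μ C) :
    superLevel μ ν c = 0 :=
  nonpos_iff_eq_zero.1 <| (iInf₂_le ∅ fun C _ => h C).trans_eq hμ0

lemma exists_superLevel_eq [Finite X] (hν0 : ν ∅ = 0) (c : ℝ≥0∞) :
    ∃ A, (∀ C ⊆ Aᶜ, ν C ≤ c * μ C) ∧ μ A = superLevel μ ν c := by
  obtain ⟨A, hA, hmin⟩ := exists_min_image {A : Set X | ∀ C ⊆ Aᶜ, ν C ≤ c * μ C} μ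
    (toFinite _) ⟨univ, fun C hC => by simp [subset_empty_iff.1 (compl_univ ▸ hC), hν0]⟩
  exact ⟨A, hA, le_antisymm (le_iInf₂ hmin) (iInf₂_le A hA)⟩

lemma antitone_superLevel_ofReal : Antitone fun t : ℝ => superLevel μ ν (ENNReal.ofReal t) :=
  superLevel_antitone.comp_monotone fun _ _ => ENNReal.ofReal_le_ofReal

end SuperLevel

lemma ENNReal.tsum_mul_tsum_eq_tsum_sum_range (f g : ℕ → ℝ≥0∞) :
    (∑' n, f n) * ∑' n, g n = ∑' n, ∑ k ∈ Finset.range (n + 1), f k * g (n - k) := by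
  simp_rw [← Finset.Nat.sum_antidiagonal_eq_sum_range_succ fun k l => f k * g l,
    ← ENNReal.tsum_mul_right, ← ENNReal.tsum_mul_left, ← ENNReal.tsum_prod,
    ← Finset.HasAntidiagonal.sigmaAntidiagonalEquivProd.tsum_eq (fun x : ℕ × ℕ => f x.1 * g x.2),
    ENNReal.tsum_sigma', ← Finset.tsum_subtype]
  rfl

section Greedy

variable {X : Type} [Finite X] {μ : Set X → ℝ≥0∞}

/-- Take `G` maximal among the subsets of `S` with `c * μ G ≤ mass w G`: a violating `C ⊆ S \ G`
could be added to it. -/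
lemma exists_greedy_subset (hμ0 : μ ∅ = 0) (hμ : ∀ A B, μ (A ∪ B) ≤ μ A + μ B)
    (w : X → ℝ≥0∞) (c : ℝ≥0∞) (S : Set X) :
    ∃ G ⊆ S, (∀ C ⊆ S \ G, mass w C ≤ c * μ C) ∧ c * μ G ≤ mass w G := by
  obtain ⟨G, ⟨hGS, hG⟩, hmax⟩ :=
    (toFinite {G | G ⊆ S ∧ c * μ G ≤ mass w G}).exists_maximal
      ⟨∅, empty_subset S, by simp [hμ0, mass_empty]⟩
  refine ⟨G, hGS, fun C hC => ?_, hG⟩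
  by_contra! hlt
  have hdisj : Disjoint G C := disjoint_sdiff_right.mono_right hC
  have hCG : G ∪ C ⊆ G := hmax ⟨union_subset hGS (hC.trans sdiff_subset), calc
      c * μ (G ∪ C) ≤ c * μ G + c * μ C := by rw [← mul_add]; gcongr; exact hμ _ _
      _ ≤ mass w G + mass w C := add_le_add hG hlt.le
      _ = mass w (G ∪ C) := (mass_union w hdisj).symm⟩ subset_union_left
  have hC0 : C = ∅ := eq_empty_of_forall_notMem fun x hx =>
    disjoint_left.1 hdisj (hCG (mem_union_right G hx)) hx
  simp [hC0, mass_empty] at hlt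

lemma exists_greedy_chain (hμ0 : μ ∅ = 0) (hμ : ∀ A B, μ (A ∪ B) ≤ μ A + μ B)
    (w : X → ℝ≥0∞) (c : ℕ → ℝ≥0∞) :
    ∃ B : ℕ → Set X, B 0 = ∅ ∧ (∀ n, B n ⊆ B (n + 1)) ∧
      (∀ n, ∀ C ⊆ (B (n + 1))ᶜ, mass w C ≤ c n * μ C) ∧
      ∀ n, c n * μ (B (n + 1) \ B n) ≤ mass w (B (n + 1) \ B n) := by
  choose G hGS hGadm hGmass using exists_greedy_subset hμ0 hμ w
  let B : ℕ → Set X := fun n => Nat.rec ∅ (fun n Bn => Bn ∪ G (c n) Bnᶜ) n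
  have hBsucc : ∀ n, B (n + 1) = B n ∪ G (c n) (B n)ᶜ := fun _ => rfl
  have hdiff : ∀ n, B (n + 1) \ B n = G (c n) (B n)ᶜ := fun n => by
    rw [hBsucc, union_sdiff_left, sdiff_eq_left]
    exact disjoint_compl_left.mono_left (hGS _ _)
  refine ⟨B, rfl, fun n => hBsucc n ▸ subset_union_left, fun n C hC => ?_, fun n => ?_⟩
  · exact hGadm _ _ C (by rwa [hBsucc, compl_union, ← sdiff_eq] at hC)
  · rw [hdiff]
    exact hGmass _ _

/-- The greedy chain puts `B (n + 1)` among the admissible sets at level `a * q ^ n`, and the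
pieces `B (j + 1) \ B j` are disjoint. -/
lemma tsum_mul_superLevel_le (hμ0 : μ ∅ = 0) (hμ : ∀ A B, μ (A ∪ B) ≤ μ A + μ B)
    (w : X → ℝ≥0∞) (a q : ℝ≥0∞) :
    ∑' n, a * q ^ n * superLevel μ (mass w) (a * q ^ n) ≤ (1 - q)⁻¹ * mass w univ := by
  obtain ⟨B, hB0, hB, hBadm, hBmass⟩ := exists_greedy_chain hμ0 hμ w (fun n => a * q ^ n)
  set G : ℕ → Set X := fun j => B (j + 1) \ B j
  have hterm : ∀ n, a * q ^ n * superLevel μ (mass w) (a * q ^ n) ≤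
      ∑ j ∈ Finset.range (n + 1), mass w (G j) * q ^ (n - j) := fun n => calc
    _ ≤ a * q ^ n * μ (B (n + 1)) := by gcongr; exact iInf₂_le _ (hBadm n)
    _ ≤ a * q ^ n * ∑ j ∈ Finset.range (n + 1), μ (G j) := by
      gcongr; exact le_sum_range_diff hμ0 hμ hB0 hB _
    _ = ∑ j ∈ Finset.range (n + 1), q ^ (n - j) * (a * q ^ j * μ (G j)) := by
      rw [Finset.mul_sum]
      refine Finset.sum_congr rfl fun j hj => ?_
      rw [← pow_sub_mul_pow q (Finset.mem_range_succ_iff.1 hj)]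
      ring
    _ ≤ _ := Finset.sum_le_sum fun j _ => by rw [mul_comm]; gcongr; exact hBmass j
  have hG : ∑' j, mass w (G j) ≤ mass w univ := ENNReal.tsum_le_of_sum_range_le fun n =>
    (mass_eq_sum_range_diff w hB0 hB n).symm.trans_le (mass_mono w (subset_univ _))
  calc _ ≤ ∑' n, ∑ j ∈ Finset.range (n + 1), mass w (G j) * q ^ (n - j) :=
        ENNReal.tsum_le_tsum hterm
    _ = (∑' j, mass w (G j)) * ∑' k, q ^ k :=
        (ENNReal.tsum_mul_tsum_eq_tsum_sum_range _ _).symm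
    _ ≤ _ := by rw [ENNReal.tsum_geometric, mul_comm]; gcongr

end Greedy

/-- With optimal exceptional sets `A n` at the levels `c n`, the part of `A (n + 1)` outside `A n`
has mass at most `c n * μ (A (n + 1))`. -/
lemma mass_le_tsum_mul_superLevel {X : Type} [Finite X] {μ : Set X → ℝ≥0∞} (hμ0 : μ ∅ = 0)
    (hμ : Monotone μ) (hμtop : μ univ ≠ ∞) (w : X → ℝ≥0∞) {c : ℕ → ℝ≥0∞}
    (hc : Tendsto c atTop (𝓝 0)) (hc0 : ∀ C, mass w C ≤ c 0 * μ C) :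
    mass w univ ≤ ∑' n, c n * superLevel μ (mass w) (c (n + 1)) := by
  choose A hAadm hA using exists_superLevel_eq (μ := μ) (mass_empty w)
  have hstep : ∀ n, mass w (A (c (n + 1))) ≤
      mass w (A (c n)) + c n * superLevel μ (mass w) (c (n + 1)) := fun n => calc
    _ = mass w (A (c (n + 1)) ∩ A (c n)) + mass w (A (c (n + 1)) \ A (c n)) :=
      (mass_inter_add_diff w _ _).symm
    _ ≤ mass w (A (c n)) + c n * μ (A (c (n + 1))) := by
      gcongr
      · exact mass_mono w inter_subset_right
      · exact (hAadm _ _ (sdiff_subset_compl _ _)).trans (by gcongr; exact hμ sdiff_subset)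
    _ = _ := by rw [hA]
  have hbase : mass w (A (c 0)) = 0 := by
    refine nonpos_iff_eq_zero.1 ((hc0 _).trans ?_)
    rw [hA, superLevel_eq_zero hμ0 hc0, mul_zero]
  have hchain : ∀ N, mass w (A (c N)) ≤
      ∑ n ∈ Finset.range N, c n * superLevel μ (mass w) (c (n + 1)) := by
    intro N
    induction N with
    | zero => simp [hbase]
    | succ N ih => exact (hstep N).trans (by rw [Finset.sum_range_succ]; gcongr)
  have hN : ∀ N, mass w univ ≤
      ∑ n ∈ Finset.range N, c n * superLevel μ (mass w) (c (n + 1)) + c N * μ univ := fun N =>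
    calc mass w univ = mass w (univ ∩ A (c N)) + mass w (univ \ A (c N)) :=
        (mass_inter_add_diff w _ _).symm
      _ ≤ _ := by
        gcongr
        · exact (mass_mono w inter_subset_right).trans (hchain N)
        · exact (hAadm _ _ (sdiff_subset_compl _ _)).trans (by gcongr; exact hμ (subset_univ _))
  refine ge_of_tendsto' (x := atTop) ?_ hN
  simpa using (ENNReal.tendsto_nat_tsum _).add (ENNReal.Tendsto.mul_const hc (Or.inr hμtop))

lemma tsum_geometric_mul_comp_succ_le (h : ℝ≥0∞ → ℝ≥0∞) (a : ℝ≥0∞) {q : ℝ≥0∞} (hq0 : q ≠ 0)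
    (hq : q ≠ ∞) :
    ∑' n, a * q ^ n * h (a * q ^ (n + 1)) ≤ q⁻¹ * ∑' n, a * q ^ n * h (a * q ^ n) := calc
  _ = q⁻¹ * ∑' n, a * q ^ (n + 1) * h (a * q ^ (n + 1)) := by
    rw [← ENNReal.tsum_mul_left]
    congr! 2 with n
    have hn : a * q ^ n = q⁻¹ * (a * q ^ (n + 1)) := by
      rw [mul_comm q⁻¹, pow_succ, ← mul_assoc, mul_assoc (a * q ^ n), ENNReal.mul_inv_cancel hq0 hq,
        mul_one]
    rw [hn, mul_assoc]
  _ ≤ _ := by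
    gcongr q⁻¹ * ?_
    exact ENNReal.tsum_comp_le_tsum_of_injective (add_left_injective 1)
      fun n => a * q ^ n * h (a * q ^ n)

section Dyadic

variable {a : ℝ}

lemma iUnion_Ioc_div_two_pow (ha : 0 < a) :
    ⋃ n : ℕ, Ioc (a / 2 ^ (n + 1)) (a / 2 ^ n) = Ioc 0 a := by
  refine subset_antisymm (iUnion_subset fun n => Ioc_subset_Ioc (by positivity) ?_) fun t ht => ?_
  · exact div_le_self ha.le (one_le_pow₀ one_le_two)
  · obtain ⟨n, hn, hn'⟩ := exists_nat_pow_near ((one_le_div ht.1).2 ht.2) one_lt_two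
    refine mem_iUnion.2 ⟨n, ?_, ?_⟩
    · rwa [div_lt_iff₀ (by positivity), mul_comm, ← div_lt_iff₀ ht.1]
    · rwa [le_div_iff₀ (by positivity), mul_comm, ← le_div_iff₀ ht.1]

lemma lintegral_Ioc_eq_tsum_dyadic (ha : 0 < a) (g : ℝ → ℝ≥0∞) :
    ∫⁻ t in Ioc 0 a, g t = ∑' n : ℕ, ∫⁻ t in Ioc (a / 2 ^ (n + 1)) (a / 2 ^ n), g t := by
  have hanti : Antitone fun n : ℕ => a / 2 ^ n := fun m n hmn =>
    div_le_div_of_nonneg_left ha.le (by positivity) (pow_le_pow_right₀ one_le_two hmn)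
  rw [← iUnion_Ioc_div_two_pow ha]
  exact lintegral_iUnion (fun _ => measurableSet_Ioc) hanti.pairwise_disjoint_on_Ioc_succ g

lemma ofReal_div_two_pow_sub (n : ℕ) :
    ENNReal.ofReal (a / 2 ^ n - a / 2 ^ (n + 1)) = ENNReal.ofReal (a / 2 ^ (n + 1)) := by
  congr 1
  rw [pow_succ]
  ring

lemma ofReal_div_two_pow_eq_two_mul (n : ℕ) :
    ENNReal.ofReal (a / 2 ^ n) = 2 * ENNReal.ofReal (a / 2 ^ (n + 1)) := by
  rw [← ENNReal.ofReal_ofNat 2, ← ENNReal.ofReal_mul zero_le_two, pow_succ]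
  congr 1
  field_simp

variable {g : ℝ → ℝ≥0∞}

lemma Antitone.setLIntegral_Ioc_le (hg : Antitone g) {b c : ℝ} :
    ∫⁻ t in Ioc b c, g t ≤ ENNReal.ofReal (c - b) * g b := calc
  _ ≤ ∫⁻ _ in Ioc b c, g b := setLIntegral_mono' measurableSet_Ioc fun _ ht => hg ht.1.le
  _ = _ := by rw [setLIntegral_const, Real.volume_Ioc, mul_comm]

lemma Antitone.le_setLIntegral_Ioc (hg : Antitone g) {b c : ℝ} :
    ENNReal.ofReal (c - b) * g c ≤ ∫⁻ t in Ioc b c, g t := calc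
  _ = ∫⁻ _ in Ioc b c, g c := by rw [setLIntegral_const, Real.volume_Ioc, mul_comm]
  _ ≤ _ := setLIntegral_mono' measurableSet_Ioc fun _ ht => hg ht.2

lemma Antitone.setLIntegral_Ioc_zero_le_tsum (hg : Antitone g) (ha : 0 < a) :
    ∫⁻ t in Ioc 0 a, g t ≤ ∑' n : ℕ, ENNReal.ofReal (a / 2 ^ n) * g (a / 2 ^ n) := calc
  _ ≤ ∑' n : ℕ, ENNReal.ofReal (a / 2 ^ (n + 1)) * g (a / 2 ^ (n + 1)) := by
    rw [lintegral_Ioc_eq_tsum_dyadic ha]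
    exact ENNReal.tsum_le_tsum fun n => (hg.setLIntegral_Ioc_le).trans_eq <| by
      rw [ofReal_div_two_pow_sub]
  _ ≤ _ := ENNReal.tsum_comp_le_tsum_of_injective (add_left_injective 1)
    fun n => ENNReal.ofReal (a / 2 ^ n) * g (a / 2 ^ n)

lemma Antitone.tsum_le_two_mul_setLIntegral_Ioc_zero (hg : Antitone g) (ha : 0 < a) :
    ∑' n : ℕ, ENNReal.ofReal (a / 2 ^ n) * g (a / 2 ^ n) ≤ 2 * ∫⁻ t in Ioc 0 a, g t := by
  rw [lintegral_Ioc_eq_tsum_dyadic ha, ← ENNReal.tsum_mul_left]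
  refine ENNReal.tsum_le_tsum fun n => ?_
  rw [ofReal_div_two_pow_eq_two_mul, mul_assoc, ← ofReal_div_two_pow_sub]
  gcongr
  exact hg.le_setLIntegral_Ioc

end Dyadic

lemma ENNReal.ofReal_div_two_pow (a : ℝ) (n : ℕ) :
    ENNReal.ofReal (a / 2 ^ n) = ENNReal.ofReal a * 2⁻¹ ^ n := by
  rw [div_eq_mul_inv, ENNReal.ofReal_mul' (by positivity), ← inv_pow,
    ENNReal.ofReal_pow (by norm_num), ENNReal.ofReal_inv_of_pos two_pos, ENNReal.ofReal_ofNat]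

section Collapsing

variable {X : Type} [Finite X] {μ : Set X → ℝ≥0∞} {w : X → ℝ≥0∞}

/-- The constant is `∑ₓ w x / μ {x}`, since `μ {x} ≤ μ C` for `x ∈ C`. -/
lemma IsFiniteOuterMeasure.exists_mass_le_ofReal_mul (hμ : IsFiniteOuterMeasure μ)
    (hw : ∀ x, w x ≠ ∞) : ∃ a : ℝ, 0 < a ∧ ∀ C, mass w C ≤ ENNReal.ofReal a * μ C := by
  have := Fintype.ofFinite X
  have hK : ∑' x, w x / μ {x} ≠ ∞ := by
    rw [tsum_fintype]
    exact ENNReal.sum_ne_top.2 fun x _ => ENNReal.div_ne_top (hw x) (hμ.singleton_pos x).ne'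
  set K := ∑' x, w x / μ {x}
  refine ⟨K.toReal + 1, by positivity, fun C => ?_⟩
  calc mass w C = ∑' x : C, w x / μ {(x : X)} * μ {(x : X)} := by
        refine tsum_congr fun x => (ENNReal.div_mul_cancel ?_ ?_).symm
        exacts [(hμ.singleton_pos x).ne', (hμ.singleton_lt_top x).ne]
    _ ≤ ∑' x : C, w x / μ {(x : X)} * μ C :=
        ENNReal.tsum_le_tsum fun x => by gcongr; exact hμ.mono (singleton_subset_iff.2 x.2)
    _ ≤ K * μ C := by
        rw [ENNReal.tsum_mul_right]
        gcongr
        exact ENNReal.tsum_comp_le_tsum_of_injective Subtype.val_injective _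
    _ ≤ _ := by
        gcongr
        exact (ENNReal.le_ofReal_iff_toReal_le hK (by positivity)).2
          (le_add_of_nonneg_right zero_le_one)

theorem IsFiniteOuterMeasure.lintegral_superLevel_le (hμ : IsFiniteOuterMeasure μ)
    (hw : ∀ x, w x ≠ ∞) :
    ∫⁻ t in Ioi 0, superLevel μ (mass w) (ENNReal.ofReal t) ≤ 2 * mass w univ := by
  obtain ⟨a, ha, hC⟩ := hμ.exists_mass_le_ofReal_mul hw
  have hzero : EqOn (fun t => superLevel μ (mass w) (ENNReal.ofReal t)) 0 (Ioi a) := fun t ht =>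
    superLevel_eq_zero hμ.empty fun C => (hC C).trans (by gcongr; exact ht.le)
  calc _ = ∫⁻ t in Ioc 0 a, superLevel μ (mass w) (ENNReal.ofReal t) := by
        rw [← Ioc_union_Ioi_eq_Ioi ha.le, lintegral_union measurableSet_Ioi Ioc_disjoint_Ioi_same,
          setLIntegral_congr_fun measurableSet_Ioi hzero, Pi.zero_def, lintegral_zero, add_zero]
    _ ≤ ∑' n : ℕ, ENNReal.ofReal (a / 2 ^ n) *
          superLevel μ (mass w) (ENNReal.ofReal (a / 2 ^ n)) :=
        antitone_superLevel_ofReal.setLIntegral_Ioc_zero_le_tsum ha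
    _ ≤ (1 - 2⁻¹)⁻¹ * mass w univ := by
        simp_rw [ENNReal.ofReal_div_two_pow]
        exact tsum_mul_superLevel_le hμ.empty hμ.union_le w _ _
    _ = _ := by rw [ENNReal.one_sub_inv_two, inv_inv]

theorem IsFiniteOuterMeasure.mass_le_lintegral_superLevel (hμ : IsFiniteOuterMeasure μ)
    (hw : ∀ x, w x ≠ ∞) :
    mass w univ ≤ 4 * ∫⁻ t in Ioi 0, superLevel μ (mass w) (ENNReal.ofReal t) := by
  obtain ⟨a, ha, hC⟩ := hμ.exists_mass_le_ofReal_mul hw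
  have hc : Tendsto (fun n => ENNReal.ofReal a * 2⁻¹ ^ n) atTop (𝓝 0) := by
    simpa using ENNReal.Tendsto.const_mul
      (ENNReal.tendsto_pow_atTop_nhds_zero_of_lt_one (by norm_num)) (Or.inr ENNReal.ofReal_ne_top)
  calc _ ≤ ∑' n, ENNReal.ofReal a * 2⁻¹ ^ n *
          superLevel μ (mass w) (ENNReal.ofReal a * 2⁻¹ ^ (n + 1)) :=
        mass_le_tsum_mul_superLevel hμ.empty hμ.mono (hμ.lt_top univ).ne w hc (by simpa using hC)
    _ ≤ 2⁻¹⁻¹ * ∑' n, ENNReal.ofReal a * 2⁻¹ ^ n *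
          superLevel μ (mass w) (ENNReal.ofReal a * 2⁻¹ ^ n) :=
        tsum_geometric_mul_comp_succ_le _ _ (by norm_num) (by norm_num)
    _ = 2 * ∑' n : ℕ, ENNReal.ofReal (a / 2 ^ n) *
          superLevel μ (mass w) (ENNReal.ofReal (a / 2 ^ n)) := by
        simp_rw [inv_inv, ENNReal.ofReal_div_two_pow]
    _ ≤ 2 * (2 * ∫⁻ t in Ioc 0 a, superLevel μ (mass w) (ENNReal.ofReal t)) := by
        gcongr
        exact antitone_superLevel_ofReal.tsum_le_two_mul_setLIntegral_Ioc_zero ha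
    _ ≤ _ := by
        rw [← mul_assoc, two_mul 2, two_add_two_eq_four]
        gcongr
        exact Ioc_subset_Ioi_self

end Collapsing

section OuterLp

variable {X : Type} {μ : Set X → ℝ≥0∞} {ω f : X → ℝ≥0∞} {p : ℝ≥0∞}

lemma IsFiniteOuterMeasure.forall_inv_mul_le_iff [Finite X] (hμ : IsFiniteOuterMeasure μ)
    (w : X → ℝ≥0∞) (S : Set X) (c : ℝ≥0∞) :
    (∀ B, (μ B)⁻¹ * mass w (B ∩ S) ≤ c) ↔ ∀ C ⊆ S, mass w C ≤ c * μ C := by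
  refine ⟨fun h C hC => ?_, fun h B => ?_⟩
  · obtain rfl | hne := C.eq_empty_or_nonempty
    · simp [mass_empty]
    have := h C
    rwa [inter_eq_left.2 hC, ENNReal.inv_mul_le_iff (hμ.pos hne).ne' (hμ.lt_top C).ne,
      mul_comm] at this
  · calc (μ B)⁻¹ * mass w (B ∩ S) ≤ (μ B)⁻¹ * (c * μ B) := by
          gcongr
          exact (h _ inter_subset_right).trans (by gcongr; exact hμ.mono inter_subset_left)
      _ = c * ((μ B)⁻¹ * μ B) := by ring
      _ ≤ c := mul_le_of_le_one_right' (ENNReal.inv_mul_le_one _)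

lemma ellF_indicator_compl (hp0 : p ≠ 0) (hp : p ≠ ∞) (A B : Set X) :
    ellF μ ω p (Aᶜ.indicator f) B =
      ((μ B)⁻¹ * mass (fun x => ω x * f x ^ p.toReal) (B ∩ Aᶜ)) ^ p.toReal⁻¹ := by
  have hT : 0 < p.toReal := ENNReal.toReal_pos hp0 hp
  have hind : (fun x => ω x * Aᶜ.indicator f x ^ p.toReal) =
      Aᶜ.indicator fun x => ω x * f x ^ p.toReal := by
    ext x
    by_cases hx : x ∈ Aᶜ <;> simp [hx, ENNReal.zero_rpow_of_pos hT]
  rw [ellF, if_neg hp, mass, tsum_subtype B (fun x => ω x * Aᶜ.indicator f x ^ p.toReal), hind,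
    indicator_indicator, ← tsum_subtype]

lemma IsFiniteOuterMeasure.slF_eq_superLevel [Finite X] (hμ : IsFiniteOuterMeasure μ) (hp0 : p ≠ 0)
    (hp : p ≠ ∞) (lam : ℝ≥0∞) :
    slF μ ω p f lam = superLevel μ (mass fun x => ω x * f x ^ p.toReal) (lam ^ p.toReal) := by
  have hT : 0 < p.toReal := ENNReal.toReal_pos hp0 hp
  simp only [slF, supF, superLevel, iSup_le_iff, ellF_indicator_compl hp0 hp,
    ENNReal.rpow_inv_le_iff hT, hμ.forall_inv_mul_le_iff]

lemma lintegral_rpow_deriv_mul_comp {T : ℝ} (hT : 0 < T) (h : ℝ → ℝ≥0∞) :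
    ∫⁻ l in Ioi 0, ENNReal.ofReal (T * l ^ (T - 1)) * h (l ^ T) = ∫⁻ t in Ioi 0, h t := by
  have himage : (fun l : ℝ => l ^ T) '' Ioi 0 = Ioi 0 := by
    refine subset_antisymm (image_subset_iff.2 fun l hl => Real.rpow_pos_of_pos hl T) fun t ht => ?_
    exact ⟨t ^ T⁻¹, Real.rpow_pos_of_pos ht _, Real.rpow_inv_rpow (le_of_lt ht) hT.ne'⟩
  conv_rhs => rw [← himage]
  rw [lintegral_image_eq_lintegral_abs_deriv_mul measurableSet_Ioi
    (fun l hl => (Real.hasDerivAt_rpow_const (Or.inl (ne_of_gt hl))).hasDerivWithinAt)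
    ((Real.rpow_left_injOn hT.ne').mono fun l (hl : (0 : ℝ) < l) => hl.le)]
  refine setLIntegral_congr_fun measurableSet_Ioi fun l hl => ?_
  rw [abs_of_pos (mul_pos hT (Real.rpow_pos_of_pos hl _))]

lemma IsFiniteOuterMeasure.LpF_eq [Finite X] (hμ : IsFiniteOuterMeasure μ) (hp0 : p ≠ 0)
    (hp : p ≠ ∞) :
    LpF μ ω p p f = (∫⁻ t in Ioi 0,
      superLevel μ (mass fun x => ω x * f x ^ p.toReal) (ENNReal.ofReal t)) ^ p.toReal⁻¹ := by
  have hT : 0 < p.toReal := ENNReal.toReal_pos hp0 hp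
  rw [LpF, if_neg hp, ← lintegral_rpow_deriv_mul_comp hT
    fun t => superLevel μ (mass fun x => ω x * f x ^ p.toReal) (ENNReal.ofReal t)]
  congr 1
  refine setLIntegral_congr_fun measurableSet_Ioi fun l hl => ?_
  rw [hμ.slF_eq_superLevel hp0 hp, ENNReal.ofReal_rpow_of_nonneg (le_of_lt hl) hT.le]

lemma wLpF_eq_mass (hp : p ≠ ∞) :
    wLpF ω p f = mass (fun x => ω x * f x ^ p.toReal) univ ^ p.toReal⁻¹ := by
  rw [wLpF, if_neg hp, mass, tsum_univ fun x => ω x * f x ^ p.toReal]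

lemma LpF_top_eq_wLpF_top : LpF μ ω ∞ ∞ f = wLpF ω ∞ f := by
  simp only [LpF, supF, ellF, wLpF, if_pos]
  exact le_antisymm (iSup_le fun A => iSup₂_le fun x _ => le_iSup f x)
    (iSup_le fun x => le_iSup_of_le {x} (le_iSup₂_of_le x rfl le_rfl))

theorem IsFiniteOuterMeasure.collapsing_of_ne_top [Finite X] (hμ : IsFiniteOuterMeasure μ)
    (hω : ∀ x, ω x ≠ ∞) (hf : ∀ x, f x ≠ ∞) (hp0 : p ≠ 0) (hp : p ≠ ∞) :
    (4 ^ p.toReal⁻¹)⁻¹ * wLpF ω p f ≤ LpF μ ω p p f ∧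
      LpF μ ω p p f ≤ 4 ^ p.toReal⁻¹ * wLpF ω p f := by
  have hs : 0 ≤ p.toReal⁻¹ := inv_nonneg.2 ENNReal.toReal_nonneg
  have hw : ∀ x, ω x * f x ^ p.toReal ≠ ∞ := fun x =>
    ENNReal.mul_ne_top (hω x) (ENNReal.rpow_ne_top_of_nonneg ENNReal.toReal_nonneg (hf x))
  have hrpow : ∀ {x y : ℝ≥0∞}, x ≤ 4 * y → x ^ p.toReal⁻¹ ≤ 4 ^ p.toReal⁻¹ * y ^ p.toReal⁻¹ :=
    fun h => (ENNReal.rpow_le_rpow h hs).trans_eq (ENNReal.mul_rpow_of_nonneg _ _ hs)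
  rw [hμ.LpF_eq hp0 hp, wLpF_eq_mass hp, ENNReal.inv_mul_le_iff
    (ENNReal.rpow_pos (by norm_num) (by norm_num)).ne'
    (ENNReal.rpow_ne_top_of_nonneg hs (by norm_num))]
  exact ⟨hrpow (hμ.mass_le_lintegral_superLevel hw),
    hrpow ((hμ.lintegral_superLevel_le hw).trans (by gcongr; norm_num))⟩

end OuterLp

/-- Collapsing of exponents in the finite setting (Theorem 1.1(i)):
for every `0 < p ≤ ∞` there is a constant `C = C(p)`, uniform in the finite outer measure
setting `(X, μ, ω)`, such that `C⁻¹ ‖f‖_{L^p(X,ω)} ≤ ‖f‖_{L^p(ℓ^p)} ≤ C ‖f‖_{L^p(X,ω)}`. -/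
theorem collapsing_finite (p : ℝ≥0∞) (hp : 0 < p) :
    ∃ C : ℝ≥0∞, 0 < C ∧ C ≠ ∞ ∧
      ∀ (X : Type) (_ : Fintype X) (μ : Set X → ℝ≥0∞) (ω : X → ℝ≥0∞),
        μ ∅ = 0 →
        (∀ A B : Set X, A ⊆ B → μ A ≤ μ B) →
        (∀ A B : Set X, μ (A ∪ B) ≤ μ A + μ B) →
        (∀ x : X, 0 < μ {x} ∧ μ {x} < ∞) →
        (∀ x : X, 0 < ω x ∧ ω x < ∞) →
        ∀ f : X → ℝ≥0∞, (∀ x, f x ≠ ∞) →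
          C⁻¹ * wLpF ω p f ≤ LpF μ ω p p f ∧ LpF μ ω p p f ≤ C * wLpF ω p f := by
  refine ⟨4 ^ p.toReal⁻¹, ENNReal.rpow_pos (by norm_num) (by norm_num),
    ENNReal.rpow_ne_top_of_nonneg (inv_nonneg.2 ENNReal.toReal_nonneg) (by norm_num), ?_⟩
  intro X _ μ ω h0 hmono hsub hpt hω f hf
  have hμ : IsFiniteOuterMeasure μ := ⟨h0, hmono, hsub, fun x => (hpt x).1, fun x => (hpt x).2⟩
  obtain rfl | hp' := eq_or_ne p ∞
  · -- `∞.toReal = 0`, so here `C = 1`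
    simp [LpF_top_eq_wLpF_top]
  · exact hμ.collapsing_of_ne_top (fun x => (hω x).2.ne) hf hp.ne' hp'

end
end

section
/- Greedy decomposition in the finite setting (Proposition 2.1): Let 0 < p, r < ∞. There exists a constant C = C(p,r) such that for every finite outer measure setting (X, μ, ω) and every nonnegative function f on X there exists a sequence of sets {E_k : k ∈ ℤ} ⊆ 𝒫(X) such that, setting F_k = ∪_{l ≥ k} E_l, for every k ∈ ℤ: (1) ℓ^r(f 1_{F_{k+1}^c})(E_k) > 2^k whenever E_k ≠ ∅; (2) ‖f 1_{F_k^c}‖_{L^∞(ℓ^r)} ≤ 2^k; (3) μ(ℓ^r(f) > 2^k) ≤ Σ_{l ≥ k} μ(E_l); (4) μ(E_k) ≤ C μ(ℓ^r(f) > 2^{k-1}). -/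
/-!
At a dyadic level `2 ^ k`, take a family of pairwise disjoint sets `A`, each with
`ℓ^r(g)(A) > 2 ^ k`, of maximal cardinality. Its union `E` brings `‖g 1_{Eᶜ}‖_{L^∞(ℓ^r)}` down
to `2 ^ k`, since an uncovered set on which `g` is still too large could be added to the
family. The levels are processed downward from some `2 ^ L ≥ ‖f‖_{L^∞(ℓ^r)}`, each time with
`f` restricted to the complement of the sets already chosen.

For the bound on `μ(E_k)`, let `B` realise `μ(ℓ^r(f) > 2 ^ (k - 1))`. Each piece `A` splits
into `A \ B`, where the weighted sum is at most `2 ^ ((k - 1) r) μ(A)`, and `A ∩ B`. Summing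
over the pieces and using `‖f 1_{F_{k+1}ᶜ}‖ ≤ 2 ^ (k + 1)` on the parts inside `B` gives a
linear inequality for `t = Σ μ(A) ≥ μ(E_k)`, which solves to `t ≤ C μ(B)`.
-/

open MeasureTheory Set
open scoped ENNReal

noncomputable section

namespace ENNReal

theorem le_inv_one_sub_mul_of_le_mul_add {a b ε : ℝ≥0∞} (ha : a ≠ ∞) (hε : ε < 1)
    (h : a ≤ ε * a + b) : a ≤ (1 - ε)⁻¹ * b := by
  have h1 : (1 - ε) * a ≤ b := by
    rw [ENNReal.sub_mul fun _ _ => ha, one_mul, tsub_le_iff_right, add_comm]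
    exact h
  rwa [← ENNReal.div_eq_inv_mul, ENNReal.le_div_iff_mul_le (.inl (tsub_pos_of_lt hε).ne')
    (.inl (tsub_le_self.trans_lt one_lt_top).ne), mul_comm]

theorem exists_le_two_zpow {a : ℝ≥0∞} (ha : a ≠ ∞) : ∃ L : ℤ, a ≤ 2 ^ L := by
  obtain ⟨n, hn⟩ := ENNReal.exists_nat_gt ha
  refine ⟨n, hn.le.trans ?_⟩
  rw [zpow_natCast]
  exact_mod_cast Nat.lt_two_pow_self.le

end ENNReal

theorem biUnion_le_eq_union {α : Type*} (E : ℤ → Set α) (k : ℤ) :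
    ⋃ (l : ℤ) (_ : k ≤ l), E l = E k ∪ ⋃ (l : ℤ) (_ : k + 1 ≤ l), E l := by
  ext x
  simp only [mem_iUnion, mem_union]
  constructor
  · rintro ⟨l, hkl, hx⟩
    rcases hkl.eq_or_lt with rfl | hlt
    exacts [.inl hx, .inr ⟨l, hlt, hx⟩]
  · rintro (hx | ⟨l, hkl, hx⟩)
    exacts [⟨k, le_rfl, hx⟩, ⟨l, by omega, hx⟩]

theorem exists_downward_recursion {α : Type*} (L : ℤ) (S : ℤ → Set α → Set α) :
    ∃ E : ℤ → Set α, (∀ k, L ≤ k → E k = ∅) ∧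
      ∀ k < L, E k = S k (⋃ (l : ℤ) (_ : k + 1 ≤ l), E l) := by
  -- `F n` is the union of the `n` sets built so far, `E (L - 1), …, E (L - n)`.
  let F : ℕ → Set α := fun n => Nat.rec ∅ (fun n s => s ∪ S (L - 1 - n) s) n
  let E : ℤ → Set α := fun k => if k < L then S k (F (L - 1 - k).toNat) else ∅
  have htail : ∀ n : ℕ, ∀ k, (L - k).toNat = n → ⋃ (l : ℤ) (_ : k ≤ l), E l = F n := by
    intro n
    induction n with
    | zero =>
      intro k hk
      exact iUnion_eq_empty.2 fun l => iUnion_eq_empty.2 fun hl => if_neg (by omega)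
    | succ n ih =>
      intro k hk
      have hE : E k = S (L - 1 - n) (F n) := by
        rw [show L - 1 - (n : ℤ) = k by omega, ← show (L - 1 - k).toNat = n by omega]
        exact if_pos (by omega)
      rw [biUnion_le_eq_union, ih (k + 1) (by omega), hE, union_comm]
  refine ⟨E, fun k hk => if_neg (by omega), fun k hk => ?_⟩
  rw [htail _ (k + 1) rfl]
  exact (if_pos hk).trans (by congr 3; omega)

section FiniteOuterMeasure

variable {X : Type}

structure IsFiniteOuterMeasure_s4 (μ : Set X → ℝ≥0∞) : Prop where
  empty : μ ∅ = 0
  mono : Monotone μ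
  union_le : ∀ A B : Set X, μ (A ∪ B) ≤ μ A + μ B
  singleton_pos : ∀ x, 0 < μ {x}
  singleton_lt_top : ∀ x, μ {x} < ∞

namespace IsFiniteOuterMeasure_s4

variable {μ : Set X → ℝ≥0∞}

theorem biUnion_le (hμ : IsFiniteOuterMeasure_s4 μ) {ι : Type*} (s : Finset ι) (t : ι → Set X) :
    μ (⋃ i ∈ s, t i) ≤ ∑ i ∈ s, μ (t i) := by
  classical
  induction s using Finset.induction_on with
  | empty => simp [hμ.empty]
  | insert a s ha ih =>
    rw [Finset.set_biUnion_insert, Finset.sum_insert ha]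
    exact (hμ.union_le _ _).trans (add_le_add_right ih _)

theorem iUnion_le_tsum [Finite X] (hμ : IsFiniteOuterMeasure_s4 μ) {ι : Type*} (s : ι → Set X) :
    μ (⋃ i, s i) ≤ ∑' i, μ (s i) := by
  classical
  have := Fintype.ofFinite (⋃ i, s i)
  choose i hi using fun x : ⋃ i, s i => mem_iUnion.1 x.2
  calc μ (⋃ i, s i) ≤ μ (⋃ j ∈ Finset.univ.image i, s j) :=
        hμ.mono fun x hx => mem_iUnion₂.2 ⟨i ⟨x, hx⟩, by simp, hi ⟨x, hx⟩⟩
    _ ≤ ∑ j ∈ Finset.univ.image i, μ (s j) := hμ.biUnion_le _ _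
    _ ≤ ∑' j, μ (s j) := ENNReal.sum_le_tsum _

theorem ne_zero (hμ : IsFiniteOuterMeasure_s4 μ) {A : Set X} (hA : A.Nonempty) : μ A ≠ 0 :=
  ((hμ.singleton_pos hA.some).trans_le (hμ.mono (singleton_subset_iff.2 hA.some_mem))).ne'

theorem ne_top [Finite X] (hμ : IsFiniteOuterMeasure_s4 μ) (A : Set X) : μ A ≠ ∞ := by
  have := Fintype.ofFinite A
  refine ne_top_of_le_ne_top ?_ ((iUnion_of_singleton_coe A).symm ▸ hμ.iUnion_le_tsum _)
  rw [tsum_fintype]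
  exact ENNReal.sum_ne_top.2 fun x _ => (hμ.singleton_lt_top x).ne

end IsFiniteOuterMeasure_s4

end FiniteOuterMeasure

section PowSum

variable {X : Type} [Fintype X] {ω : X → ℝ≥0∞} {ρ : ℝ} {g : X → ℝ≥0∞} {A B : Set X}

def powSum (ω : X → ℝ≥0∞) (ρ : ℝ) (g : X → ℝ≥0∞) (A : Set X) : ℝ≥0∞ :=
  ∑ x, A.indicator (fun y => ω y * g y ^ ρ) x

@[simp]
theorem powSum_empty : powSum ω ρ g ∅ = 0 := by
  simp [powSum]

theorem powSum_ne_top (hρ : 0 ≤ ρ) (hω : ∀ x, ω x ≠ ∞) (hg : ∀ x, g x ≠ ∞) (A : Set X) :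
    powSum ω ρ g A ≠ ∞ :=
  ENNReal.sum_ne_top.2 fun x _ => ne_top_of_le_ne_top
    (ENNReal.mul_ne_top (hω x) (ENNReal.rpow_ne_top_of_nonneg hρ (hg x))) (indicator_le_self _ _ x)

theorem powSum_biUnion {ι : Type*} (s : Finset ι) (t : ι → Set X)
    (hs : (s : Set ι).PairwiseDisjoint t) :
    powSum ω ρ g (⋃ i ∈ s, t i) = ∑ i ∈ s, powSum ω ρ g (t i) := by
  simp only [powSum, Finset.indicator_biUnion s t hs]
  exact Finset.sum_comm

theorem powSum_diff_add_inter : powSum ω ρ g (A \ B) + powSum ω ρ g (A ∩ B) = powSum ω ρ g A := by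
  simp only [powSum, ← Finset.sum_add_distrib, ← indicator_union_of_disjoint disjoint_sdiff_inter,
    sdiff_union_inter]

theorem powSum_indicator_compl (hρ : 0 < ρ) :
    powSum ω ρ (Bᶜ.indicator g) A = powSum ω ρ g (A \ B) := by
  refine Finset.sum_congr rfl fun x _ => ?_
  by_cases hA : x ∈ A <;> by_cases hB : x ∈ B <;>
    simp [indicator_of_mem, indicator_of_notMem, hA, hB, ENNReal.zero_rpow_of_pos hρ]

end PowSum

section Size

variable {X : Type} {μ : Set X → ℝ≥0∞} {ω : X → ℝ≥0∞} {r : ℝ≥0∞}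
  {g g' : X → ℝ≥0∞} {A B : Set X} {lam : ℝ≥0∞}

theorem ellF_mono (h : g ≤ g') : ellF μ ω r g A ≤ ellF μ ω r g' A := by
  unfold ellF
  split_ifs
  · exact iSup₂_mono fun x _ => h x
  · gcongr with x
    exact h x

theorem supF_mono (h : g ≤ g') : supF μ ω r g ≤ supF μ ω r g' :=
  iSup_mono fun _ => ellF_mono h

variable [Fintype X]

theorem ellF_eq_powSum (hr : r ≠ ∞) :
    ellF μ ω r g A = ((μ A)⁻¹ * powSum ω r.toReal g A) ^ r.toReal⁻¹ := by
  rw [ellF, if_neg hr, powSum, tsum_subtype A (fun y => ω y * g y ^ r.toReal), tsum_fintype]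

theorem ellF_le_iff (hμ : IsFiniteOuterMeasure_s4 μ) (hr0 : 0 < r) (hr : r ≠ ∞) :
    ellF μ ω r g A ≤ lam ↔ powSum ω r.toReal g A ≤ lam ^ r.toReal * μ A := by
  have hρ : 0 < r.toReal := ENNReal.toReal_pos hr0.ne' hr
  rcases A.eq_empty_or_nonempty with rfl | hA
  · simp [ellF_eq_powSum hr, hρ]
  · rw [ellF_eq_powSum hr, ENNReal.rpow_inv_le_iff hρ, mul_comm, ← div_eq_mul_inv,
      ENNReal.div_le_iff (hμ.ne_zero hA) (hμ.ne_top A)]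

theorem lt_ellF_iff (hμ : IsFiniteOuterMeasure_s4 μ) (hr0 : 0 < r) (hr : r ≠ ∞) :
    lam < ellF μ ω r g A ↔ lam ^ r.toReal * μ A < powSum ω r.toReal g A := by
  simpa only [not_le] using (ellF_le_iff hμ hr0 hr).not

theorem supF_le_iff (hμ : IsFiniteOuterMeasure_s4 μ) (hr0 : 0 < r) (hr : r ≠ ∞) :
    supF μ ω r g ≤ lam ↔ ∀ A, powSum ω r.toReal g A ≤ lam ^ r.toReal * μ A := by
  simp only [supF, iSup_le_iff, ellF_le_iff hμ hr0 hr]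

theorem supF_indicator_compl_le_iff (hμ : IsFiniteOuterMeasure_s4 μ) (hr0 : 0 < r) (hr : r ≠ ∞) :
    supF μ ω r (Bᶜ.indicator g) ≤ lam ↔
      ∀ A, powSum ω r.toReal g (A \ B) ≤ lam ^ r.toReal * μ A := by
  simp only [supF_le_iff hμ hr0 hr, powSum_indicator_compl (ENNReal.toReal_pos hr0.ne' hr)]

theorem supF_ne_top (hμ : IsFiniteOuterMeasure_s4 μ) (hr : r ≠ ∞) (hω : ∀ x, ω x ≠ ∞)
    (hg : ∀ x, g x ≠ ∞) : supF μ ω r g ≠ ∞ := by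
  obtain ⟨A, hA⟩ := Finite.exists_max (ellF μ ω r g)
  refine ne_top_of_le_ne_top ?_ (iSup_le hA)
  rw [ellF_eq_powSum hr]
  refine ENNReal.rpow_ne_top_of_nonneg (inv_nonneg.2 ENNReal.toReal_nonneg) ?_
  rcases A.eq_empty_or_nonempty with rfl | hA
  · simp
  · exact ENNReal.mul_ne_top (ENNReal.inv_ne_top.2 (hμ.ne_zero hA))
      (powSum_ne_top ENNReal.toReal_nonneg hω hg A)

theorem exists_measure_eq_slF (hμ : IsFiniteOuterMeasure_s4 μ) (hr0 : 0 < r) (hr : r ≠ ∞)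
    (g : X → ℝ≥0∞) (lam : ℝ≥0∞) :
    ∃ B, supF μ ω r (Bᶜ.indicator g) ≤ lam ∧ μ B = slF μ ω r g lam := by
  have huniv : supF μ ω r ((univ : Set X)ᶜ.indicator g) ≤ lam :=
    (supF_indicator_compl_le_iff hμ hr0 hr).2 fun A => by simp
  obtain ⟨B, hB, hmin⟩ := exists_min_image {B : Set X | supF μ ω r (Bᶜ.indicator g) ≤ lam} μ
    (toFinite _) ⟨univ, huniv⟩
  exact ⟨B, hB, le_antisymm (le_iInf₂ hmin) (iInf₂_le B hB)⟩

theorem slF_le_tsum (hμ : IsFiniteOuterMeasure_s4 μ) {ι : Type*} (s : ι → Set X)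
    (h : supF μ ω r ((⋃ i, s i)ᶜ.indicator g) ≤ lam) : slF μ ω r g lam ≤ ∑' i, μ (s i) :=
  (iInf₂_le (⋃ i, s i) h).trans (hμ.iUnion_le_tsum s)

end Size

section HeavyPacking

variable {X : Type} [Fintype X] {μ : Set X → ℝ≥0∞} {ω : X → ℝ≥0∞} {ρ : ℝ}
  {g : X → ℝ≥0∞} {c d : ℝ≥0∞} {P : Finset (Set X)}

structure IsHeavyPacking (μ : Set X → ℝ≥0∞) (ω : X → ℝ≥0∞) (ρ : ℝ) (g : X → ℝ≥0∞)
    (c : ℝ≥0∞) (P : Finset (Set X)) : Prop where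
  pairwiseDisjoint : (P : Set (Set X)).PairwiseDisjoint id
  heavy : ∀ A ∈ P, c * μ A < powSum ω ρ g A

theorem exists_isHeavyPacking_powSum_diff_le (hμ : Monotone μ) (ω : X → ℝ≥0∞) (ρ : ℝ)
    (g : X → ℝ≥0∞) (c : ℝ≥0∞) :
    ∃ P, IsHeavyPacking μ ω ρ g c P ∧ ∀ D, powSum ω ρ g (D \ ⋃ A ∈ P, A) ≤ c * μ D := by
  classical
  obtain ⟨P, hP, hmax⟩ := exists_max_image {P | IsHeavyPacking μ ω ρ g c P} Finset.card
    (toFinite _) ⟨∅, by simp, by simp⟩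
  refine ⟨P, hP, fun D => le_of_not_gt fun hD => ?_⟩
  -- otherwise the part of `D` not yet covered could be added to the packing
  set E := ⋃ A ∈ P, A
  have hheavy : c * μ (D \ E) < powSum ω ρ g (D \ E) :=
    lt_of_le_of_lt (by gcongr; exact hμ sdiff_subset) hD
  have hnotMem : D \ E ∉ P := fun h => by
    have : D \ E = ∅ := subset_empty_iff.1 fun x hx => hx.2 (mem_biUnion h hx)
    simp [this] at hheavy
  have hinsert : IsHeavyPacking μ ω ρ g c (insert (D \ E) P) := by
    refine ⟨?_, fun A hA => ?_⟩
    · rw [Finset.coe_insert]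
      exact hP.pairwiseDisjoint.insert fun A hA _ =>
        disjoint_sdiff_left.mono_right (subset_biUnion_of_mem (u := id) hA)
    · rcases Finset.mem_insert.1 hA with rfl | hA
      exacts [hheavy, hP.heavy A hA]
  have := hmax _ hinsert
  rw [Finset.card_insert_of_notMem hnotMem] at this
  omega

namespace IsHeavyPacking

theorem mul_sum_lt (hP : IsHeavyPacking μ ω ρ g c P) (hne : P.Nonempty) :
    c * ∑ A ∈ P, μ A < powSum ω ρ g (⋃ A ∈ P, A) := by
  rw [Finset.mul_sum]
  exact (ENNReal.sum_lt_sum_of_nonempty hne hP.heavy).trans_eq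
    (powSum_biUnion P id hP.pairwiseDisjoint).symm

theorem mul_sum_le {B : Set X} (hP : IsHeavyPacking μ ω ρ g c P)
    (hB : ∀ D, powSum ω ρ g (D \ B) ≤ d * μ D) :
    c * ∑ A ∈ P, μ A ≤ d * ∑ A ∈ P, μ A + powSum ω ρ g ((⋃ A ∈ P, A) ∩ B) := by
  have hdisj : (P : Set (Set X)).PairwiseDisjoint (· ∩ B) :=
    hP.pairwiseDisjoint.mono fun _ => inter_subset_left
  rw [iUnion₂_inter, powSum_biUnion P _ hdisj, Finset.mul_sum, Finset.mul_sum,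
    ← Finset.sum_add_distrib]
  refine Finset.sum_le_sum fun A hA => ?_
  calc c * μ A ≤ powSum ω ρ g A := (hP.heavy A hA).le
    _ = powSum ω ρ g (A \ B) + powSum ω ρ g (A ∩ B) := powSum_diff_add_inter.symm
    _ ≤ d * μ A + powSum ω ρ g (A ∩ B) := by gcongr; exact hB A

end IsHeavyPacking

end HeavyPacking

section Level

/-- Solving `t ≤ q⁻¹ t + q μ(B)` for `t`, with `q = 2 ^ ρ`. -/
def greedyConst (ρ : ℝ) : ℝ≥0∞ := (1 - (2 ^ ρ)⁻¹)⁻¹ * 2 ^ ρ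

theorem greedyConst_pos (ρ : ℝ) : 0 < greedyConst ρ :=
  ENNReal.mul_pos (ENNReal.inv_ne_zero.2 (tsub_le_self.trans_lt ENNReal.one_lt_top).ne)
    (ENNReal.rpow_pos two_pos ENNReal.ofNat_ne_top).ne'

theorem greedyConst_ne_top {ρ : ℝ} (hρ : 0 < ρ) : greedyConst ρ ≠ ∞ :=
  ENNReal.mul_ne_top
    (ENNReal.inv_ne_top.2 (tsub_pos_of_lt (ENNReal.inv_lt_one.2
      (ENNReal.one_lt_rpow ENNReal.one_lt_two hρ))).ne')
    (ENNReal.rpow_ne_top_of_nonneg hρ.le ENNReal.ofNat_ne_top)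

variable {X : Type} [Fintype X] {μ : Set X → ℝ≥0∞} {ω : X → ℝ≥0∞} {r : ℝ≥0∞}
  {g : X → ℝ≥0∞} {lam : ℝ≥0∞} {P : Finset (Set X)}

theorem IsHeavyPacking.sum_le_greedyConst_mul (hμ : IsFiniteOuterMeasure_s4 μ) (hr0 : 0 < r)
    (hr : r ≠ ∞) (hlam0 : lam ≠ 0) (hlam : lam ≠ ∞)
    (hP : IsHeavyPacking μ ω r.toReal g (lam ^ r.toReal) P) {B : Set X}
    (hB : supF μ ω r (Bᶜ.indicator g) ≤ lam * 2⁻¹) (hg : supF μ ω r g ≤ lam * 2) :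
    ∑ A ∈ P, μ A ≤ greedyConst r.toReal * μ B := by
  have hρ : 0 < r.toReal := ENNReal.toReal_pos hr0.ne' hr
  set q : ℝ≥0∞ := 2 ^ r.toReal
  set c : ℝ≥0∞ := lam ^ r.toReal
  set t := ∑ A ∈ P, μ A
  have hc0 : c ≠ 0 := (ENNReal.rpow_pos (pos_iff_ne_zero.2 hlam0) hlam).ne'
  have hctop : c ≠ ∞ := ENNReal.rpow_ne_top_of_nonneg hρ.le hlam
  have hB' : ∀ D, powSum ω r.toReal g (D \ B) ≤ c * q⁻¹ * μ D := by
    simpa only [ENNReal.mul_rpow_of_nonneg _ _ hρ.le, ENNReal.inv_rpow]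
      using (supF_indicator_compl_le_iff hμ hr0 hr).1 hB
  have hinter : powSum ω r.toReal g ((⋃ A ∈ P, A) ∩ B) ≤ c * q * μ B := by
    refine ((supF_le_iff hμ hr0 hr).1 hg _).trans ?_
    rw [ENNReal.mul_rpow_of_nonneg _ _ hρ.le]
    gcongr
    exact hμ.mono inter_subset_right
  have key : t ≤ q⁻¹ * t + q * μ B := by
    rw [← ENNReal.mul_le_mul_iff_right hc0 hctop]
    calc c * t ≤ c * q⁻¹ * t + powSum ω r.toReal g ((⋃ A ∈ P, A) ∩ B) := hP.mul_sum_le hB'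
      _ ≤ c * q⁻¹ * t + c * q * μ B := by gcongr
      _ = c * (q⁻¹ * t + q * μ B) := by ring
  rw [greedyConst, mul_assoc]
  exact ENNReal.le_inv_one_sub_mul_of_le_mul_add (ENNReal.sum_ne_top.2 fun A _ => hμ.ne_top A)
    (ENNReal.inv_lt_one.2 (ENNReal.one_lt_rpow ENNReal.one_lt_two hρ)) key

theorem exists_level_set (hμ : IsFiniteOuterMeasure_s4 μ) (hr0 : 0 < r) (hr : r ≠ ∞)
    (g : X → ℝ≥0∞) (k : ℤ) :
    ∃ E : Set X, (E.Nonempty → 2 ^ k < ellF μ ω r g E) ∧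
      supF μ ω r (Eᶜ.indicator g) ≤ 2 ^ k ∧
      ∀ B : Set X, supF μ ω r (Bᶜ.indicator g) ≤ 2 ^ (k - 1) → supF μ ω r g ≤ 2 ^ (k + 1) →
        μ E ≤ greedyConst r.toReal * μ B := by
  obtain ⟨P, hP, hmax⟩ :=
    exists_isHeavyPacking_powSum_diff_le hμ.mono ω r.toReal g (((2 : ℝ≥0∞) ^ k) ^ r.toReal)
  have hμE : μ (⋃ A ∈ P, A) ≤ ∑ A ∈ P, μ A := hμ.biUnion_le P id
  refine ⟨⋃ A ∈ P, A, fun hne => ?_, (supF_indicator_compl_le_iff hμ hr0 hr).2 hmax,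
    fun B hB hg => hμE.trans (hP.sum_le_greedyConst_mul hμ hr0 hr
      (ENNReal.zpow_pos two_ne_zero ENNReal.ofNat_ne_top k).ne'
      (ENNReal.zpow_lt_top two_ne_zero ENNReal.ofNat_ne_top k).ne ?_ ?_)⟩
  · have hPne : P.Nonempty := by
      obtain ⟨x, hx⟩ := hne
      obtain ⟨A, hA, -⟩ := mem_iUnion₂.1 hx
      exact ⟨A, hA⟩
    rw [lt_ellF_iff hμ hr0 hr]
    exact lt_of_le_of_lt (by gcongr) (hP.mul_sum_lt hPne)
  · rwa [ENNReal.zpow_sub two_ne_zero ENNReal.ofNat_ne_top, zpow_one] at hB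
  · rwa [ENNReal.zpow_add two_ne_zero ENNReal.ofNat_ne_top, zpow_one] at hg

end Level

theorem supF_indicator_compl_biUnion_le {X : Type} {μ : Set X → ℝ≥0∞} {ω : X → ℝ≥0∞}
    {r : ℝ≥0∞} {f : X → ℝ≥0∞} {E : ℤ → Set X} {L : ℤ} (hL : supF μ ω r f ≤ 2 ^ L)
    (hE : ∀ k, L ≤ k → E k = ∅)
    (hstep : ∀ k < L, supF μ ω r
      ((E k)ᶜ.indicator ((⋃ (l : ℤ) (_ : k + 1 ≤ l), E l)ᶜ.indicator f)) ≤ 2 ^ k)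
    (k : ℤ) : supF μ ω r ((⋃ (l : ℤ) (_ : k ≤ l), E l)ᶜ.indicator f) ≤ 2 ^ k := by
  rcases lt_or_ge k L with hk | hk
  · rw [biUnion_le_eq_union, compl_union, ← indicator_indicator]
    exact hstep k hk
  · have : ⋃ (l : ℤ) (_ : k ≤ l), E l = ∅ :=
      iUnion_eq_empty.2 fun l => iUnion_eq_empty.2 fun hl => hE l (hk.trans hl)
    rw [this, compl_empty, indicator_univ]
    exact hL.trans (ENNReal.zpow_le_of_le one_le_two hk)

theorem greedy_decomposition_finite_general (r : ℝ≥0∞)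
    (hr0 : 0 < r) (hr : r ≠ ∞) :
    ∃ C : ℝ≥0∞, 0 < C ∧ C ≠ ∞ ∧
      ∀ (X : Type) (_ : Fintype X) (μ : Set X → ℝ≥0∞) (ω : X → ℝ≥0∞),
        μ ∅ = 0 →
        (∀ A B : Set X, A ⊆ B → μ A ≤ μ B) →
        (∀ A B : Set X, μ (A ∪ B) ≤ μ A + μ B) →
        (∀ x : X, 0 < μ {x} ∧ μ {x} < ∞) →
        (∀ x : X, 0 < ω x ∧ ω x < ∞) →
        ∀ f : X → ℝ≥0∞, (∀ x, f x ≠ ∞) →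
          ∃ E : ℤ → Set X,
            ∀ k : ℤ,
              ((E k).Nonempty →
                (2 : ℝ≥0∞) ^ k <
                  ellF μ ω r ((⋃ (l : ℤ) (_ : k + 1 ≤ l), E l)ᶜ.indicator f) (E k)) ∧
              supF μ ω r ((⋃ (l : ℤ) (_ : k ≤ l), E l)ᶜ.indicator f) ≤ (2 : ℝ≥0∞) ^ k ∧
              slF μ ω r f ((2 : ℝ≥0∞) ^ k) ≤ ∑' l : {l : ℤ // k ≤ l}, μ (E l.1) ∧
              μ (E k) ≤ C * slF μ ω r f ((2 : ℝ≥0∞) ^ (k - 1)) := by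
  refine ⟨greedyConst r.toReal, greedyConst_pos _,
    greedyConst_ne_top (ENNReal.toReal_pos hr0.ne' hr), ?_⟩
  intro X _ μ ω hμ0 hmono hsub hpt hω f hf
  have hμ : IsFiniteOuterMeasure_s4 μ :=
    ⟨hμ0, fun A B => hmono A B, hsub, fun x => (hpt x).1, fun x => (hpt x).2⟩
  obtain ⟨L, hL⟩ := ENNReal.exists_le_two_zpow (supF_ne_top hμ hr (fun x => (hω x).2.ne) hf)
  choose S hS_lt hS_le hS_meas using exists_level_set hμ hr0 hr
  obtain ⟨E, hE_top, hE⟩ := exists_downward_recursion L fun k F => S (Fᶜ.indicator f) k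
  have hcut := supF_indicator_compl_biUnion_le hL hE_top fun k hk => by
    rw [hE k hk]
    exact hS_le _ k
  refine ⟨E, fun k => ⟨fun hne => ?_, hcut k, ?_, ?_⟩⟩
  · have hk : k < L := lt_of_not_ge fun hk => by simp [hE_top k hk] at hne
    rw [hE k hk] at hne ⊢
    exact hS_lt _ k hne
  · refine slF_le_tsum hμ (fun l : {l : ℤ // k ≤ l} => E l.1) ?_
    rw [iUnion_subtype]
    exact hcut k
  · rcases lt_or_ge k L with hk | hk
    · obtain ⟨B, hB, hμB⟩ := exists_measure_eq_slF hμ hr0 hr f (2 ^ (k - 1))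
      rw [← hμB, hE k hk]
      exact hS_meas _ k B
        ((supF_mono fun x => indicator_le_indicator (indicator_le_self _ f x)).trans hB)
        (hcut (k + 1))
    · rw [hE_top k hk, hμ.empty]
      exact zero_le

/-- Greedy decomposition in the finite setting (Proposition 2.1): for `0 < p, r < ∞`
there is a constant `C = C(p,r)`, uniform in the finite outer measure setting `(X, μ, ω)`,
such that every nonnegative function `f` admits a sequence of sets `{E_k : k ∈ ℤ}` with,
for `F_k = ⋃_{l ≥ k} E_l` and every `k ∈ ℤ`:
(1) `ℓ^r(f 1_{F_{k+1}^c})(E_k) > 2^k` whenever `E_k ≠ ∅`;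
(2) `‖f 1_{F_k^c}‖_{L^∞(ℓ^r)} ≤ 2^k`;
(3) `μ(ℓ^r(f) > 2^k) ≤ Σ_{l ≥ k} μ(E_l)`;
(4) `μ(E_k) ≤ C μ(ℓ^r(f) > 2^{k-1})`. -/
theorem greedy_decomposition_finite (p r : ℝ≥0∞)
    (hp0 : 0 < p) (hp : p ≠ ∞) (hr0 : 0 < r) (hr : r ≠ ∞) :
    ∃ C : ℝ≥0∞, 0 < C ∧ C ≠ ∞ ∧
      ∀ (X : Type) (_ : Fintype X) (μ : Set X → ℝ≥0∞) (ω : X → ℝ≥0∞),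
        μ ∅ = 0 →
        (∀ A B : Set X, A ⊆ B → μ A ≤ μ B) →
        (∀ A B : Set X, μ (A ∪ B) ≤ μ A + μ B) →
        (∀ x : X, 0 < μ {x} ∧ μ {x} < ∞) →
        (∀ x : X, 0 < ω x ∧ ω x < ∞) →
        ∀ f : X → ℝ≥0∞, (∀ x, f x ≠ ∞) →
          ∃ E : ℤ → Set X,
            ∀ k : ℤ,
              ((E k).Nonempty →
                (2 : ℝ≥0∞) ^ k <
                  ellF μ ω r ((⋃ (l : ℤ) (_ : k + 1 ≤ l), E l)ᶜ.indicator f) (E k)) ∧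
              supF μ ω r ((⋃ (l : ℤ) (_ : k ≤ l), E l)ᶜ.indicator f) ≤ (2 : ℝ≥0∞) ^ k ∧
              slF μ ω r f ((2 : ℝ≥0∞) ^ k) ≤ ∑' l : {l : ℤ // k ≤ l}, μ (E l.1) ∧
              μ (E k) ≤ C * slF μ ω r f ((2 : ℝ≥0∞) ^ (k - 1)) :=
  greedy_decomposition_finite_general r hr0 hr

end
end
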